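/- Every limit word of the Fibonacci word has the same set of finite subwords as the Fibonacci word itself: if u : ℤ → {0,1} is a pointwise limit of shifts S_{−h_k} v of the Fibonacci word v along a sequence h_k with |h_k| → ∞, then a finite word w is a subword of u if and only if it is a subword of v. -/

import Mathlib

noncomputable def alpha : ℝ := (Real.sqrt 5 - 1) / 2

noncomputable def v (n : ℤ) : ℕ :=
  if Int.fract ((n : ℝ) * alpha) ∈ Set.Ico (1 - alpha) 1 then 1 else 0

/-- `w` occurs in the two-sided word `u`. -/
def Occurs (u : ℤ → ℕ) (w : List ℕ) : Prop :=
  ∃ k : ℤ, ∀ i : ℕ, i < w.length → u (k + i) = w.getD i 0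

/-!
A window of a limit word `u` is copied from a window of `v`, so every subword of `u` is one of `v`.
Conversely, `v n = g (n α)` for a `1`-periodic `g` that is locally constant to the right, so a
window of `v` at `k₀` reappears at every `n` with `fract ((n - k₀) α)` small enough. By Dirichlet's
approximation theorem and irrationality, `0 < q α - p < ε` for some integers `p, q`, so stepping
by `q` moves the orbit by less than `ε` and such `n` occur with bounded gaps: `v` is uniformly
recurrent. A limit of shifts of a uniformly
recurrent word sees each of its words inside a fixed finite window, hence contains all of them.
-/

open Filter Topology Set

def OccursAt (x : ℤ → ℕ) (w : List ℕ) (k : ℤ) : Prop :=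
  ∀ i : ℕ, i < w.length → x (k + i) = w.getD i 0

def UniformlyRecurrent (x : ℤ → ℕ) : Prop :=
  ∀ w, Occurs x w → ∃ F : Finset ℤ, ∀ m : ℤ, ∃ j ∈ F, OccursAt x w (m + j)

section LimitWords

variable {ι : Type*} {l : Filter ι} [l.NeBot] {h : ι → ℤ} {x u : ℤ → ℕ}

theorem occurs_of_eventually_shift_eq (hlim : ∀ n, ∀ᶠ k in l, x (n + h k) = u n) {w : List ℕ}
    (hw : Occurs u w) : Occurs x w := by
  obtain ⟨m, hm⟩ := hw
  obtain ⟨k, hk⟩ := ((eventually_all_finset (Finset.range w.length)).2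
    fun i _ => hlim (m + i)).exists
  refine ⟨m + h k, fun i hi => ?_⟩
  rw [add_right_comm, hk i (Finset.mem_range.2 hi), hm i hi]

theorem UniformlyRecurrent.occurs_of_eventually_shift_eq (hx : UniformlyRecurrent x)
    (hlim : ∀ n, ∀ᶠ k in l, x (n + h k) = u n) {w : List ℕ} (hw : Occurs x w) : Occurs u w := by
  obtain ⟨F, hF⟩ := hx w hw
  obtain ⟨k, hk⟩ := ((eventually_all_finset (F ×ˢ Finset.range w.length)).2
    fun p _ => hlim (p.1 + p.2)).exists
  obtain ⟨j, hjF, hj⟩ := hF (h k)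
  refine ⟨j, fun i hi => ?_⟩
  rw [← hk (j, i) (Finset.mem_product.2 ⟨hjF, Finset.mem_range.2 hi⟩), ← hj i hi]
  ring_nf

theorem UniformlyRecurrent.occurs_iff_of_eventually_shift_eq (hx : UniformlyRecurrent x)
    (hlim : ∀ n, ∀ᶠ k in l, x (n + h k) = u n) (w : List ℕ) : Occurs u w ↔ Occurs x w :=
  ⟨_root_.occurs_of_eventually_shift_eq hlim, hx.occurs_of_eventually_shift_eq hlim⟩

end LimitWords

theorem exists_int_mul_sub_mem_Ioo {θ : ℝ} (hθ : Irrational θ) {ε : ℝ} (hε : 0 < ε) :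
    ∃ q p : ℤ, q * θ - p ∈ Ioo 0 ε := by
  obtain ⟨n, hn⟩ := exists_nat_gt (1 / ε)
  have hn0 : 0 < n := by exact_mod_cast (one_div_pos.2 hε).trans hn
  obtain ⟨p, q, hq, -, hqp⟩ := Real.exists_int_int_abs_mul_sub_le θ hn0
  have hne : (q : ℝ) * θ - p ≠ 0 := ((hθ.intCast_mul hq.ne').sub_intCast p).ne_zero
  have hlt : |(q : ℝ) * θ - p| < ε := by
    refine hqp.trans_lt ?_
    rw [div_lt_iff₀ (by positivity)]
    rw [div_lt_iff₀ hε] at hn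
    linarith
  rcases hne.lt_or_gt with hneg | hpos
  · exact ⟨-q, -p, by push_cast; constructor <;> linarith [neg_abs_le ((q : ℝ) * θ - p)]⟩
  · exact ⟨q, p, hpos, (le_abs_self _).trans_lt hlt⟩

theorem exists_le_ceil_fract_add_mul_lt {c : ℝ} (hc : 0 < c) (y : ℝ) :
    ∃ k : ℕ, k ≤ ⌈1 / c⌉₊ ∧ Int.fract (y + k * c) < c := by
  set t := Int.fract y
  have ht : 0 < (1 - t) / c := div_pos (by linarith [Int.fract_lt_one y]) hc
  set k := ⌈(1 - t) / c⌉₊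
  have hk_ge : 1 - t ≤ k * c := (div_le_iff₀ hc).1 (Nat.le_ceil _)
  have hk_lt : k * c < 1 - t + c := by
    have := (lt_div_iff₀ hc).1 (by linarith [Nat.ceil_lt_add_one ht.le] : (k : ℝ) - 1 < (1 - t) / c)
    linarith
  refine ⟨k, Nat.ceil_mono (by gcongr; linarith [Int.fract_nonneg y]), ?_⟩
  have hfloor : (1 : ℝ) ≤ ⌊t + k * c⌋ := by
    exact_mod_cast Int.le_floor.2 (by push_cast; linarith)
  have hy : t + ⌊y⌋ = y := Int.fract_add_floor y
  rw [show y + k * c = t + k * c + ⌊y⌋ by linear_combination -hy, Int.fract_add_intCast,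
    Int.fract]
  linarith

theorem exists_finset_fract_add_mul_lt {θ : ℝ} (hθ : Irrational θ) {ε : ℝ} (hε : 0 < ε) :
    ∃ F : Finset ℤ, ∀ y : ℝ, ∃ j ∈ F, Int.fract (y + j * θ) < ε := by
  obtain ⟨q, p, hc0, hcε⟩ := exists_int_mul_sub_mem_Ioo hθ hε
  refine ⟨(Finset.range (⌈1 / (q * θ - p)⌉₊ + 1)).image fun k : ℕ => (k * q : ℤ), fun y => ?_⟩
  obtain ⟨k, hk, hfr⟩ := exists_le_ceil_fract_add_mul_lt hc0 y
  refine ⟨k * q, Finset.mem_image.2 ⟨k, Finset.mem_range.2 (Nat.lt_succ_of_le hk), rfl⟩, ?_⟩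
  rw [show y + ((k * q : ℤ) : ℝ) * θ = y + k * (q * θ - p) + ((k * p : ℤ) : ℝ) by push_cast; ring,
    Int.fract_add_intCast]
  exact hfr.trans hcε

theorem uniformlyRecurrent_rotationCoding {g : ℝ → ℕ} {θ : ℝ} (hθ : Irrational θ)
    (hper : Function.Periodic g 1) (hright : ∀ y, ∀ᶠ t in 𝓝[≥] (0 : ℝ), g (y + t) = g y) :
    UniformlyRecurrent fun n : ℤ => g (n * θ) := by
  rintro w ⟨k₀, hk₀⟩
  obtain ⟨ε, hε, hstable⟩ := mem_nhdsGE_iff_exists_Ico_subset.1 <|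
    (eventually_all_finset (Finset.range w.length)).2 fun i _ => hright ((k₀ + i : ℤ) * θ)
  obtain ⟨F, hF⟩ := exists_finset_fract_add_mul_lt hθ hε
  refine ⟨F, fun m => ?_⟩
  obtain ⟨j, hjF, hj⟩ := hF ((m - k₀) * θ)
  refine ⟨j, hjF, fun i hi => ?_⟩
  set t := Int.fract ((m - k₀) * θ + j * θ)
  have hshift : ((m + j + i : ℤ) : ℝ) * θ = (k₀ + i : ℤ) * θ + t + ⌊(m - k₀) * θ + j * θ⌋ * 1 := by
    have := Int.fract_add_floor ((m - k₀) * θ + j * θ)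
    push_cast
    linear_combination -this
  calc g ((m + j + i : ℤ) * θ) = g ((k₀ + i : ℤ) * θ + t) := by
        rw [hshift]; exact hper.int_mul _ _
    _ = g ((k₀ + i : ℤ) * θ) := hstable ⟨Int.fract_nonneg _, hj⟩ i (Finset.mem_range.2 hi)
    _ = w.getD i 0 := hk₀ i hi

noncomputable def icoCoding (a b y : ℝ) : ℕ :=
  if Int.fract y ∈ Ico a b then 1 else 0

theorem icoCoding_periodic (a b : ℝ) : Function.Periodic (icoCoding a b) 1 := fun y => by
  simp only [icoCoding, Int.fract_add_one]

theorem eventually_add_mem_Ico_iff (a b z : ℝ) :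
    ∀ᶠ t in 𝓝[≥] (0 : ℝ), (z + t ∈ Ico a b ↔ z ∈ Ico a b) := by
  rcases lt_or_ge z a with hza | haz
  · filter_upwards [nhdsWithin_le_nhds (Iio_mem_nhds (sub_pos.2 hza))] with t ht
    simp only [mem_Iio, mem_Ico] at ht ⊢
    constructor <;> intro h <;> linarith [h.1]
  rcases lt_or_ge z b with hzb | hbz
  · filter_upwards [self_mem_nhdsWithin, nhdsWithin_le_nhds (Iio_mem_nhds (sub_pos.2 hzb))]
      with t ht₀ ht
    simp only [mem_Ici, mem_Iio, mem_Ico] at ht₀ ht ⊢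
    constructor <;> intro <;> constructor <;> linarith
  · filter_upwards [self_mem_nhdsWithin] with t ht₀
    simp only [mem_Ici, mem_Ico] at ht₀ ⊢
    constructor <;> intro h <;> linarith [h.2]

theorem eventually_fract_add_eq (y : ℝ) :
    ∀ᶠ t in 𝓝[≥] (0 : ℝ), Int.fract (y + t) = Int.fract y + t := by
  filter_upwards [self_mem_nhdsWithin,
    nhdsWithin_le_nhds (Iio_mem_nhds (sub_pos.2 (Int.fract_lt_one y)))] with t ht₀ ht
  refine Int.fract_eq_iff.2 ⟨by linarith [Int.fract_nonneg y, mem_Ici.1 ht₀],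
    by linarith [mem_Iio.1 ht], ⌊y⌋, ?_⟩
  rw [← Int.self_sub_floor]; ring

theorem icoCoding_eventually_add_eq (a b y : ℝ) :
    ∀ᶠ t in 𝓝[≥] (0 : ℝ), icoCoding a b (y + t) = icoCoding a b y := by
  filter_upwards [eventually_fract_add_eq y, eventually_add_mem_Ico_iff a b (Int.fract y)]
    with t hfract hmem
  simp only [icoCoding, hfract, hmem]

theorem alpha_irrational : Irrational alpha := by
  have := ((Nat.prime_five.irrational_sqrt.sub_intCast 1).div_natCast two_ne_zero)
  simpa [alpha] using this

-- `v` is definitionally `fun n => icoCoding (1 - alpha) 1 (n * alpha)`.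
theorem limit_words_have_same_subwords_general (u : ℤ → ℕ) (h : ℕ → ℤ)
    (hlim : ∀ n : ℤ, ∀ᶠ k in Filter.atTop, v (n + h k) = u n) :
    ∀ w : List ℕ, (Occurs u w ↔ Occurs v w) :=
  (uniformlyRecurrent_rotationCoding alpha_irrational (icoCoding_periodic (1 - alpha) 1)
    (icoCoding_eventually_add_eq (1 - alpha) 1)).occurs_iff_of_eventually_shift_eq hlim

theorem limit_words_have_same_subwords (u : ℤ → ℕ) (h : ℕ → ℤ)
    (hinf : Filter.Tendsto (fun k => |h k|) Filter.atTop Filter.atTop)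
    (hlim : ∀ n : ℤ, ∀ᶠ k in Filter.atTop, v (n + h k) = u n) :
    ∀ w : List ℕ, (Occurs u w ↔ Occurs v w) :=
  limit_words_have_same_subwords_general u h hlim
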